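/- arXiv:1801.05654 — 2 statements merged into one kernel-verified Lean document; each statement's English description precedes it below -/
import Mathlib

section
/- Define the fourth-order Fourier coefficients C_{j_4 j_3 j_2 j_1} = ∫_t^T φ_{j_4}(s_4) ∫_t^{s_4} φ_{j_3}(s_3) ∫_t^{s_3} φ_{j_2}(s_2) ∫_t^{s_2} φ_{j_1}(s_1) ds_1 ds_2 ds_3 ds_4 with respect to the orthonormal Legendre system. Then lim_{p → ∞} Σ_{j_4=0}^{p} Σ_{j_1=0}^{p} C_{j_4 j_4 j_1 j_1} = (T − t)² / 8. -/
open MeasureTheory Filter Finset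

/-- Legendre polynomials via the three-term recurrence
`(n+2) P_{n+2}(x) = (2n+3) x P_{n+1}(x) - (n+1) P_n(x)`, with `P_0 = 1`, `P_1 = x`. -/
noncomputable def legendreP : ℕ → ℝ → ℝ
  | 0 => fun _ => 1
  | 1 => fun x => x
  | n + 2 => fun x =>
      ((2 * (n : ℝ) + 3) * x * legendreP (n + 1) x - ((n : ℝ) + 1) * legendreP n x) / ((n : ℝ) + 2)

/-- The orthonormal Legendre system on `[t, T]`. -/
noncomputable def legendreSys (t T : ℝ) (j : ℕ) (x : ℝ) : ℝ :=
  Real.sqrt ((2 * (j : ℝ) + 1) / (T - t)) * legendreP j ((2 * x - T - t) / (T - t))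

/-- The trigonometric orthonormal system on `[t, T]`. -/
noncomputable def trigSys (t T : ℝ) (j : ℕ) (x : ℝ) : ℝ :=
  if j = 0 then 1 / Real.sqrt (T - t)
  else if j % 2 = 1 then
    Real.sqrt (2 / (T - t)) * Real.sin (2 * Real.pi * (((j + 1) / 2 : ℕ) : ℝ) * (x - t) / (T - t))
  else
    Real.sqrt (2 / (T - t)) * Real.cos (2 * Real.pi * ((j / 2 : ℕ) : ℝ) * (x - t) / (T - t))

/-- Double Fourier coefficient `C_{j₂ j₁}`. -/
noncomputable def C2 (t T : ℝ) (φ : ℕ → ℝ → ℝ) (ψ1 ψ2 : ℝ → ℝ) (j2 j1 : ℕ) : ℝ :=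
  ∫ s2 in t..T, ψ2 s2 * φ j2 s2 * ∫ s1 in t..s2, ψ1 s1 * φ j1 s1

/-- Triple Fourier coefficient `C_{j₃ j₂ j₁}`. -/
noncomputable def C3 (t T : ℝ) (φ : ℕ → ℝ → ℝ) (ψ1 ψ2 ψ3 : ℝ → ℝ) (j3 j2 j1 : ℕ) : ℝ :=
  ∫ s3 in t..T, ψ3 s3 * φ j3 s3 *
    ∫ s2 in t..s3, ψ2 s2 * φ j2 s2 * ∫ s1 in t..s2, ψ1 s1 * φ j1 s1

/-- Fourth-order Fourier coefficient `C_{j₄ j₃ j₂ j₁}` (with `ψ_l ≡ 1`). -/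
noncomputable def C4 (t T : ℝ) (φ : ℕ → ℝ → ℝ) (j4 j3 j2 j1 : ℕ) : ℝ :=
  ∫ s4 in t..T, φ j4 s4 * ∫ s3 in t..s4, φ j3 s3 *
    ∫ s2 in t..s3, φ j2 s2 * ∫ s1 in t..s2, φ j1 s1

/-!
Write `Ψ_j(x) = ∫_t^x φ_j`. Integrating by parts, `C_{aabb} = Ψ_a(T) ∫ φ_a Ψ_b²/2 - ∫ φ_a Ψ_a Ψ_b²/2`,
and the second terms, symmetrised in `(a, b)`, add up to `(∑_a Ψ_a(T)²/2)²`. The constant `1` is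
`√(T - t) φ_0`, so `∑_a Ψ_a(T) φ_a ≡ 1` and `∑_a Ψ_a(T)² = T - t`; hence the double sum equals
`∑_b ∫ Ψ_b²/2 - (T - t)²/8`. For the Legendre system `Ψ_{b+1}` is a multiple of `P_{b+2} - P_b`,
so orthogonality and `∫ P_n² = 2/(2n+1)` make `∑_{b ≤ p} ∫ Ψ_b²/2` telescope to
`(T - t)²/4 - (T - t)²/16 · (1/(2p+1) + 1/(2p+3))`.
-/

noncomputable def legendreDeriv : ℕ → ℝ → ℝ
  | 0 => fun _ => 0
  | 1 => fun _ => 1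
  | n + 2 => fun x =>
      ((2 * (n : ℝ) + 3) * (legendreP (n + 1) x + x * legendreDeriv (n + 1) x) -
        ((n : ℝ) + 1) * legendreDeriv n x) / ((n : ℝ) + 2)

lemma legendreP_add_two (n : ℕ) (x : ℝ) :
    ((n : ℝ) + 2) * legendreP (n + 2) x =
      (2 * (n : ℝ) + 3) * x * legendreP (n + 1) x - ((n : ℝ) + 1) * legendreP n x := by
  rw [legendreP]
  field_simp

lemma legendreDeriv_add_two_mul (n : ℕ) (x : ℝ) :
    ((n : ℝ) + 2) * legendreDeriv (n + 2) x =
      (2 * (n : ℝ) + 3) * (legendreP (n + 1) x + x * legendreDeriv (n + 1) x) -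
        ((n : ℝ) + 1) * legendreDeriv n x := by
  rw [legendreDeriv]
  field_simp

@[fun_prop]
theorem continuous_legendreP : ∀ n, Continuous (legendreP n)
  | 0 => continuous_const
  | 1 => continuous_id
  | n + 2 => by
    have := continuous_legendreP n
    have := continuous_legendreP (n + 1)
    unfold legendreP
    fun_prop

@[fun_prop]
theorem continuous_legendreDeriv : ∀ n, Continuous (legendreDeriv n)
  | 0 => continuous_const
  | 1 => continuous_const
  | n + 2 => by
    have := continuous_legendreDeriv n
    have := continuous_legendreDeriv (n + 1)
    unfold legendreDeriv
    fun_prop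

theorem hasDerivAt_legendreP : ∀ (n : ℕ) (x : ℝ), HasDerivAt (legendreP n) (legendreDeriv n x) x
  | 0, x => hasDerivAt_const x 1
  | 1, x => hasDerivAt_id x
  | n + 2, x =>
    ((((hasDerivAt_id' x).const_mul (2 * (n : ℝ) + 3)).fun_mul
      (hasDerivAt_legendreP (n + 1) x)).fun_sub
      ((hasDerivAt_legendreP n x).const_mul ((n : ℝ) + 1))).div_const ((n : ℝ) + 2)
      |>.congr_deriv (by rw [legendreDeriv]; ring)

theorem legendreP_one : ∀ n, legendreP n 1 = 1
  | 0 => rfl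
  | 1 => rfl
  | n + 2 => by
    have h := legendreP_add_two n 1
    rw [legendreP_one n, legendreP_one (n + 1)] at h
    exact mul_left_cancel₀ (by positivity : (n : ℝ) + 2 ≠ 0) (by linear_combination h)

theorem legendreP_neg_one : ∀ n, legendreP n (-1) = (-1) ^ n
  | 0 => rfl
  | 1 => by simp [legendreP]
  | n + 2 => by
    have h := legendreP_add_two n (-1)
    rw [legendreP_neg_one n, legendreP_neg_one (n + 1)] at h
    exact mul_left_cancel₀ (by positivity : (n : ℝ) + 2 ≠ 0) (by linear_combination h)

lemma legendreDeriv_add_two_of_mul_succ {n : ℕ} {x : ℝ}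
    (h : x * legendreDeriv (n + 1) x = legendreDeriv n x + ((n : ℝ) + 1) * legendreP (n + 1) x) :
    legendreDeriv (n + 2) x = legendreDeriv n x + (2 * (n : ℝ) + 3) * legendreP (n + 1) x :=
  mul_left_cancel₀ (by positivity : (n : ℝ) + 2 ≠ 0)
    (by linear_combination legendreDeriv_add_two_mul n x + (2 * (n : ℝ) + 3) * h)

theorem mul_legendreDeriv_succ : ∀ (n : ℕ) (x : ℝ),
    x * legendreDeriv (n + 1) x = legendreDeriv n x + ((n : ℝ) + 1) * legendreP (n + 1) x
  | 0, x => by simp [legendreP, legendreDeriv]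
  | 1, x => by
    have h := legendreP_add_two 0 x
    norm_num [legendreDeriv, legendreP] at h ⊢
    linarith
  | n + 2, x => by
    have h₀ := mul_legendreDeriv_succ n x
    have h₁ := mul_legendreDeriv_succ (n + 1) x
    have hD := legendreDeriv_add_two_mul (n + 1) x
    have hP := legendreP_add_two (n + 1) x
    push_cast at h₁ hD hP ⊢
    refine mul_left_cancel₀ (by positivity : (n : ℝ) + 3 ≠ 0) ?_
    linear_combination x * hD - ((n : ℝ) + 3) * hP + ((2 * (n : ℝ) + 5) * x) * h₁ +
      ((n : ℝ) + 3) * h₀ - ((n : ℝ) + 3) * legendreDeriv_add_two_of_mul_succ h₀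

lemma legendreDeriv_add_two (n : ℕ) (x : ℝ) :
    legendreDeriv (n + 2) x = legendreDeriv n x + (2 * (n : ℝ) + 3) * legendreP (n + 1) x :=
  legendreDeriv_add_two_of_mul_succ (mul_legendreDeriv_succ n x)

noncomputable def legendrePrimitive : ℕ → ℝ → ℝ
  | 0 => fun x => x + 1
  | n + 1 => fun x => (legendreP (n + 2) x - legendreP n x) / (2 * (n : ℝ) + 3)

lemma hasDerivAt_legendrePrimitive (n : ℕ) (x : ℝ) :
    HasDerivAt (legendrePrimitive n) (legendreP n x) x := by
  cases n with
  | zero => exact (hasDerivAt_id' x).add_const 1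
  | succ n =>
    refine ((hasDerivAt_legendreP (n + 2) x).sub (hasDerivAt_legendreP n x)).div_const _
      |>.congr_deriv ?_
    rw [legendreDeriv_add_two]
    field_simp
    ring

@[fun_prop]
lemma continuous_legendrePrimitive (n : ℕ) : Continuous (legendrePrimitive n) :=
  continuous_iff_continuousAt.2 fun x => (hasDerivAt_legendrePrimitive n x).continuousAt

lemma legendrePrimitive_neg_one (n : ℕ) : legendrePrimitive n (-1) = 0 := by
  cases n <;> simp [legendrePrimitive, legendreP_neg_one, pow_succ]

lemma legendrePrimitive_zero_one : legendrePrimitive 0 1 = 2 := by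
  norm_num [legendrePrimitive]

lemma legendrePrimitive_succ_one (n : ℕ) : legendrePrimitive (n + 1) 1 = 0 := by
  simp [legendrePrimitive, legendreP_one]

lemma integral_legendreP_mul_legendreP_succ_of_deriv {m k : ℕ} (hmk : m ≤ k)
    (hW : ∀ n, m ≤ n → ∫ x in (-1 : ℝ)..1, legendreDeriv m x * legendreP n x = 0) :
    ∫ x in (-1 : ℝ)..1, legendreP m x * legendreP (k + 1) x = 0 := by
  rw [intervalIntegral.integral_mul_deriv_eq_deriv_mul (fun x _ => hasDerivAt_legendreP m x)
    (fun x _ => hasDerivAt_legendrePrimitive (k + 1) x)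
    ((continuous_legendreDeriv m).intervalIntegrable _ _)
    ((continuous_legendreP _).intervalIntegrable _ _),
    legendrePrimitive_succ_one, legendrePrimitive_neg_one]
  have hsplit : ∫ x in (-1 : ℝ)..1, legendreDeriv m x * legendrePrimitive (k + 1) x =
      ((∫ x in (-1 : ℝ)..1, legendreDeriv m x * legendreP (k + 2) x) -
        ∫ x in (-1 : ℝ)..1, legendreDeriv m x * legendreP k x) / (2 * (k : ℝ) + 3) := by
    rw [← intervalIntegral.integral_sub, ← intervalIntegral.integral_div]
    · exact intervalIntegral.integral_congr fun x _ => by simp only [legendrePrimitive]; ring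
    all_goals apply Continuous.intervalIntegrable; fun_prop
  rw [hsplit, hW _ (by omega), hW k hmk]
  simp

-- By `legendreDeriv_add_two`, `P'_m` is a combination of `P_j` with `j < m`; the induction on `m`
-- interleaves this with orthogonality.
theorem integral_legendreDeriv_mul_legendreP :
    ∀ {m n : ℕ}, m ≤ n → ∫ x in (-1 : ℝ)..1, legendreDeriv m x * legendreP n x = 0
  | 0, _, _ => by simp [legendreDeriv]
  | 1, k + 1, _ =>
    integral_legendreP_mul_legendreP_succ_of_deriv (Nat.zero_le k)
      fun _ _ => by simp [legendreDeriv]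
  | m + 2, k + 1, h => by
    have hW := integral_legendreDeriv_mul_legendreP (m := m) (n := k + 1) (by omega)
    have hZ := integral_legendreP_mul_legendreP_succ_of_deriv (m := m + 1) (k := k) (by omega)
      fun _ h' => integral_legendreDeriv_mul_legendreP h'
    calc ∫ x in (-1 : ℝ)..1, legendreDeriv (m + 2) x * legendreP (k + 1) x
        = ∫ x in (-1 : ℝ)..1, legendreDeriv m x * legendreP (k + 1) x +
            (2 * (m : ℝ) + 3) * (legendreP (m + 1) x * legendreP (k + 1) x) :=
          intervalIntegral.integral_congr fun x _ => by
            simp only [legendreDeriv_add_two]; ring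
      _ = 0 := by
          rw [intervalIntegral.integral_add, intervalIntegral.integral_const_mul, hW, hZ]
          · ring
          all_goals apply Continuous.intervalIntegrable; fun_prop

theorem integral_legendreP_mul_legendreP_of_ne {m n : ℕ} (h : m ≠ n) :
    ∫ x in (-1 : ℝ)..1, legendreP m x * legendreP n x = 0 := by
  wlog hmn : m < n generalizing m n
  · simp_rw [mul_comm (legendreP m _)]
    exact this h.symm (by omega)
  obtain ⟨k, rfl⟩ : ∃ k, n = k + 1 := ⟨n - 1, by omega⟩
  exact integral_legendreP_mul_legendreP_succ_of_deriv (by omega)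
    fun _ h' => integral_legendreDeriv_mul_legendreP h'

lemma integral_mul_legendreP_add_two {f : ℝ → ℝ} (hf : Continuous f) (n : ℕ) (a b : ℝ) :
    ((n : ℝ) + 2) * ∫ x in a..b, f x * legendreP (n + 2) x =
      (2 * (n : ℝ) + 3) * (∫ x in a..b, x * f x * legendreP (n + 1) x) -
        ((n : ℝ) + 1) * ∫ x in a..b, f x * legendreP n x := by
  simp only [← intervalIntegral.integral_const_mul]
  rw [← intervalIntegral.integral_sub]
  · exact intervalIntegral.integral_congr fun x _ => by
      linear_combination f x * legendreP_add_two n x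
  all_goals apply Continuous.intervalIntegrable; fun_prop

lemma integral_legendreP_mul_self_add_two (n : ℕ) :
    (2 * (n : ℝ) + 5) * ∫ x in (-1 : ℝ)..1, legendreP (n + 2) x * legendreP (n + 2) x =
      (2 * (n : ℝ) + 3) * ∫ x in (-1 : ℝ)..1, legendreP (n + 1) x * legendreP (n + 1) x := by
  have h₁ := integral_mul_legendreP_add_two (continuous_legendreP (n + 2)) n (-1) 1
  have h₂ := integral_mul_legendreP_add_two (continuous_legendreP (n + 1)) (n + 1) (-1) 1
  have hswap : ∫ x in (-1 : ℝ)..1, x * legendreP (n + 1) x * legendreP (n + 2) x =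
      ∫ x in (-1 : ℝ)..1, x * legendreP (n + 2) x * legendreP (n + 1) x :=
    intervalIntegral.integral_congr fun x _ => by ring
  rw [integral_legendreP_mul_legendreP_of_ne (m := n + 2) (n := n) (by omega)] at h₁
  rw [integral_legendreP_mul_legendreP_of_ne (m := n + 1) (n := n + 1 + 2) (by omega), hswap] at h₂
  push_cast at h₂
  refine mul_left_cancel₀ (by positivity : (n : ℝ) + 2 ≠ 0) ?_
  linear_combination (2 * (n : ℝ) + 5) * h₁ - (2 * (n : ℝ) + 3) * h₂

theorem integral_legendreP_mul_self :
    ∀ n : ℕ, ∫ x in (-1 : ℝ)..1, legendreP n x * legendreP n x = 2 / (2 * (n : ℝ) + 1)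
  | 0 => by norm_num [legendreP]
  | 1 => by norm_num [legendreP, ← sq, integral_pow]
  | n + 2 => by
    have h := integral_legendreP_mul_self_add_two n
    rw [integral_legendreP_mul_self (n + 1)] at h
    have hprev : (2 * (n : ℝ) + 3) * (2 / (2 * ((n + 1 : ℕ) : ℝ) + 1)) = 2 := by
      push_cast
      field_simp
      ring
    rw [eq_div_iff (by positivity)]
    push_cast
    linear_combination h + hprev

lemma integral_legendrePrimitive_zero_sq :
    ∫ x in (-1 : ℝ)..1, legendrePrimitive 0 x ^ 2 = 8 / 3 := by
  simp only [legendrePrimitive]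
  rw [intervalIntegral.integral_comp_add_right (fun x => x ^ 2)]
  norm_num [integral_pow]

lemma integral_legendrePrimitive_succ_sq (n : ℕ) :
    ∫ x in (-1 : ℝ)..1, legendrePrimitive (n + 1) x ^ 2 =
      4 / ((2 * (n : ℝ) + 1) * (2 * (n : ℝ) + 3) * (2 * (n : ℝ) + 5)) := by
  have hexpand : ∫ x in (-1 : ℝ)..1, legendrePrimitive (n + 1) x ^ 2 =
      ((∫ x in (-1 : ℝ)..1, legendreP (n + 2) x * legendreP (n + 2) x) -
        2 * (∫ x in (-1 : ℝ)..1, legendreP n x * legendreP (n + 2) x) +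
        ∫ x in (-1 : ℝ)..1, legendreP n x * legendreP n x) / (2 * (n : ℝ) + 3) ^ 2 := by
    rw [← intervalIntegral.integral_const_mul, ← intervalIntegral.integral_sub,
      ← intervalIntegral.integral_add, ← intervalIntegral.integral_div]
    · refine intervalIntegral.integral_congr fun x _ => ?_
      simp only [legendrePrimitive]
      field_simp
      ring
    all_goals apply Continuous.intervalIntegrable; fun_prop
  rw [hexpand, integral_legendreP_mul_self, integral_legendreP_mul_self,
    integral_legendreP_mul_legendreP_of_ne (by omega)]
  push_cast
  field_simp
  ring

section IteratedIntegral

variable {t T : ℝ} {φ Ψ : ℕ → ℝ → ℝ}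

lemma integral_mul_primitive_sq (hφ : ∀ j, Continuous (φ j))
    (hΨ : ∀ j x, HasDerivAt (Ψ j) (φ j x) x) (hΨt : ∀ j, Ψ j t = 0) (j : ℕ) (x : ℝ) :
    ∫ s in t..x, φ j s * ∫ r in t..s, φ j r = Ψ j x ^ 2 / 2 := by
  have hcont : Continuous (Ψ j) := continuous_iff_continuousAt.2 fun x => (hΨ j x).continuousAt
  calc ∫ s in t..x, φ j s * ∫ r in t..s, φ j r = ∫ s in t..x, φ j s * Ψ j s :=
        intervalIntegral.integral_congr fun s _ => by
          rw [intervalIntegral.integral_eq_sub_of_hasDerivAt (fun r _ => hΨ j r)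
            ((hφ j).intervalIntegrable _ _), hΨt, sub_zero]
    _ = Ψ j x ^ 2 / 2 := by
        rw [intervalIntegral.integral_eq_sub_of_hasDerivAt
          (fun s _ => (((hΨ j s).fun_pow 2).div_const 2).congr_deriv (by ring))
          (((hφ j).fun_mul hcont).intervalIntegrable _ _), hΨt]
        ring

lemma C4_diag_eq (hφ : ∀ j, Continuous (φ j)) (hΨ : ∀ j x, HasDerivAt (Ψ j) (φ j x) x)
    (hΨt : ∀ j, Ψ j t = 0) (a b : ℕ) :
    C4 t T φ a a b b = Ψ a T * (∫ x in t..T, φ a x * (Ψ b x ^ 2 / 2)) -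
      ∫ x in t..T, Ψ a x * φ a x * (Ψ b x ^ 2 / 2) := by
  have hΨc : Continuous (Ψ b) := continuous_iff_continuousAt.2 fun x => (hΨ b x).continuousAt
  have hf : Continuous fun x => φ a x * (Ψ b x ^ 2 / 2) :=
    (hφ a).fun_mul ((hΨc.fun_pow 2).div_const 2)
  have hibp := intervalIntegral.integral_mul_deriv_eq_deriv_mul (a := t) (b := T)
    (fun x _ => hΨ a x) (fun x _ => (hf.integral_hasStrictDerivAt t x).hasDerivAt)
    ((hφ a).intervalIntegrable _ _) (hf.intervalIntegrable _ _)
  simp only [hΨt, zero_mul, sub_zero, ← mul_assoc] at hibp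
  simp only [C4, integral_mul_primitive_sq hφ hΨ hΨt b]
  linarith

lemma integral_primitive_mul_sq_add_swap (hφ : ∀ j, Continuous (φ j))
    (hΨ : ∀ j x, HasDerivAt (Ψ j) (φ j x) x) (hΨt : ∀ j, Ψ j t = 0) (a b : ℕ) :
    (∫ x in t..T, Ψ a x * φ a x * (Ψ b x ^ 2 / 2)) +
        ∫ x in t..T, Ψ b x * φ b x * (Ψ a x ^ 2 / 2) =
      Ψ a T ^ 2 / 2 * (Ψ b T ^ 2 / 2) := by
  have hΨc : ∀ j, Continuous (Ψ j) := fun j =>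
    continuous_iff_continuousAt.2 fun x => (hΨ j x).continuousAt
  have hderiv : ∀ x, HasDerivAt (fun x => Ψ a x ^ 2 / 2 * (Ψ b x ^ 2 / 2))
      (Ψ a x * φ a x * (Ψ b x ^ 2 / 2) + Ψ b x * φ b x * (Ψ a x ^ 2 / 2)) x := fun x =>
    ((((hΨ a x).fun_pow 2).div_const 2).fun_mul (((hΨ b x).fun_pow 2).div_const 2)).congr_deriv
      (by ring)
  have hcont : ∀ c d, Continuous fun x => Ψ c x * φ c x * (Ψ d x ^ 2 / 2) := fun c d =>
    ((hΨc c).fun_mul (hφ c)).fun_mul (((hΨc d).fun_pow 2).div_const 2)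
  rw [← intervalIntegral.integral_add ((hcont a b).intervalIntegrable _ _)
      ((hcont b a).intervalIntegrable _ _),
    intervalIntegral.integral_eq_sub_of_hasDerivAt (fun x _ => hderiv x)
      (((hcont a b).add (hcont b a)).intervalIntegrable _ _), hΨt]
  ring

theorem sum_sum_C4_diag (hφ : ∀ j, Continuous (φ j)) (hΨ : ∀ j x, HasDerivAt (Ψ j) (φ j x) x)
    (hΨt : ∀ j, Ψ j t = 0) {s : Finset ℕ} (hone : ∀ x, ∑ a ∈ s, Ψ a T * φ a x = 1) :
    ∑ a ∈ s, ∑ b ∈ s, C4 t T φ a a b b =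
      ∑ b ∈ s, (∫ x in t..T, Ψ b x ^ 2 / 2) - (T - t) ^ 2 / 8 := by
  have hΨc : ∀ j, Continuous (Ψ j) := fun j =>
    continuous_iff_continuousAt.2 fun x => (hΨ j x).continuousAt
  have hexpand : ∀ g : ℝ → ℝ, Continuous g →
      ∑ a ∈ s, Ψ a T * ∫ x in t..T, φ a x * g x = ∫ x in t..T, g x := fun g hg => by
    simp_rw [← intervalIntegral.integral_const_mul]
    rw [← intervalIntegral.integral_finsetSum fun a _ =>
      (continuous_const.fun_mul ((hφ a).fun_mul hg)).intervalIntegrable _ _]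
    refine intervalIntegral.integral_congr fun x _ => ?_
    simp only [← mul_assoc, ← Finset.sum_mul, hone, one_mul]
  have hnorm : ∑ a ∈ s, Ψ a T ^ 2 / 2 = (T - t) / 2 := by
    have h := hexpand (fun _ => 1) continuous_const
    simp only [mul_one, intervalIntegral.integral_const, smul_eq_mul] at h
    rw [← h, Finset.sum_div]
    refine Finset.sum_congr rfl fun a _ => ?_
    rw [intervalIntegral.integral_eq_sub_of_hasDerivAt (fun x _ => hΨ a x)
      ((hφ a).intervalIntegrable _ _), hΨt]
    ring
  have hR : ∑ a ∈ s, ∑ b ∈ s, ∫ x in t..T, Ψ a x * φ a x * (Ψ b x ^ 2 / 2) =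
      (T - t) ^ 2 / 8 := by
    have hsymm : 2 * ∑ a ∈ s, ∑ b ∈ s, ∫ x in t..T, Ψ a x * φ a x * (Ψ b x ^ 2 / 2) =
        ∑ a ∈ s, ∑ b ∈ s, Ψ a T ^ 2 / 2 * (Ψ b T ^ 2 / 2) := by
      rw [two_mul]
      nth_rewrite 2 [Finset.sum_comm]
      simp only [← Finset.sum_add_distrib, integral_primitive_mul_sq_add_swap hφ hΨ hΨt]
    rw [← Finset.sum_mul_sum, hnorm] at hsymm
    linarith
  simp only [C4_diag_eq hφ hΨ hΨt, Finset.sum_sub_distrib, hR]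
  rw [Finset.sum_comm]
  congr 1
  exact Finset.sum_congr rfl fun b _ => hexpand _ (((hΨc b).fun_pow 2).div_const 2)

end IteratedIntegral

noncomputable def legendreSysPrimitive (t T : ℝ) (j : ℕ) (x : ℝ) : ℝ :=
  Real.sqrt ((2 * (j : ℝ) + 1) / (T - t)) * ((T - t) / 2) *
    legendrePrimitive j ((2 * x - T - t) / (T - t))

section LegendreSys

variable {t T : ℝ}

@[fun_prop]
lemma continuous_legendreSys (j : ℕ) : Continuous (legendreSys t T j) := by
  unfold legendreSys
  fun_prop

lemma hasDerivAt_legendreSysPrimitive (htT : t ≠ T) (j : ℕ) (x : ℝ) :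
    HasDerivAt (legendreSysPrimitive t T j) (legendreSys t T j x) x := by
  have hTt : T - t ≠ 0 := sub_ne_zero.2 htT.symm
  have haffine : HasDerivAt (fun x => (2 * x - T - t) / (T - t)) (2 / (T - t)) x := by
    simpa using ((((hasDerivAt_id x).const_mul 2).sub_const T).sub_const t).div_const (T - t)
  refine (((hasDerivAt_legendrePrimitive j _).comp x haffine).const_mul _).congr_deriv ?_
  simp only [legendreSys]
  field_simp

lemma legendreSysPrimitive_left (htT : t ≠ T) (j : ℕ) : legendreSysPrimitive t T j t = 0 := by
  have hTt : T - t ≠ 0 := sub_ne_zero.2 htT.symm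
  have : (2 * t - T - t) / (T - t) = -1 := by field_simp; ring
  simp [legendreSysPrimitive, this, legendrePrimitive_neg_one]

lemma legendreSysPrimitive_succ_right (htT : t ≠ T) (j : ℕ) :
    legendreSysPrimitive t T (j + 1) T = 0 := by
  have hTt : T - t ≠ 0 := sub_ne_zero.2 htT.symm
  have : (2 * T - T - t) / (T - t) = 1 := by field_simp; ring
  simp [legendreSysPrimitive, this, legendrePrimitive_succ_one]

lemma legendreSysPrimitive_zero_right_mul (hT : t < T) (x : ℝ) :
    legendreSysPrimitive t T 0 T * legendreSys t T 0 x = 1 := by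
  have hTt : 0 < T - t := sub_pos.2 hT
  have : (2 * T - T - t) / (T - t) = 1 := by field_simp; ring
  simp only [legendreSysPrimitive, legendreSys, this, legendrePrimitive_zero_one, legendreP]
  rw [mul_one, show ∀ s : ℝ, s * ((T - t) / 2) * 2 * s = s * s * (T - t) from fun s => by ring,
    Real.mul_self_sqrt (by positivity)]
  field_simp
  norm_num

lemma integral_legendreSysPrimitive_sq (hT : t < T) (j : ℕ) :
    ∫ x in t..T, legendreSysPrimitive t T j x ^ 2 =
      (2 * (j : ℝ) + 1) * (T - t) ^ 2 / 8 * ∫ y in (-1 : ℝ)..1, legendrePrimitive j y ^ 2 := by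
  have hTt : 0 < T - t := sub_pos.2 hT
  have hscale : ∀ x, legendreSysPrimitive t T j x ^ 2 = (2 * (j : ℝ) + 1) * (T - t) / 4 *
      legendrePrimitive j (2 / (T - t) * x + -(T + t) / (T - t)) ^ 2 := fun x => by
    have hu : (2 * x - T - t) / (T - t) = 2 / (T - t) * x + -(T + t) / (T - t) := by
      field_simp
      ring
    rw [legendreSysPrimitive, hu, mul_pow, mul_pow, Real.sq_sqrt (by positivity)]
    field_simp
    ring
  simp only [hscale, intervalIntegral.integral_const_mul]
  rw [intervalIntegral.integral_comp_mul_add (fun y => legendrePrimitive j y ^ 2)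
    (by positivity : 2 / (T - t) ≠ 0)]
  have hlo : 2 / (T - t) * t + -(T + t) / (T - t) = -1 := by field_simp; ring
  have hhi : 2 / (T - t) * T + -(T + t) / (T - t) = 1 := by field_simp; ring
  rw [hlo, hhi, smul_eq_mul]
  field_simp
  ring

lemma sum_legendreSysPrimitive_right_mul (hT : t < T) (p : ℕ) (x : ℝ) :
    ∑ a ∈ Finset.range (p + 1), legendreSysPrimitive t T a T * legendreSys t T a x = 1 := by
  rw [Finset.sum_eq_single_of_mem 0 (by simp), legendreSysPrimitive_zero_right_mul hT]
  rintro (_ | j) _ hj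
  · exact absurd rfl hj
  · rw [legendreSysPrimitive_succ_right hT.ne, zero_mul]

lemma sum_integral_legendreSysPrimitive_sq (hT : t < T) (p : ℕ) :
    ∑ b ∈ Finset.range (p + 1), ∫ x in t..T, legendreSysPrimitive t T b x ^ 2 / 2 =
      (T - t) ^ 2 / 4 - (T - t) ^ 2 / 16 * (1 / (2 * (p : ℝ) + 1) + 1 / (2 * (p : ℝ) + 3)) := by
  simp only [intervalIntegral.integral_div, integral_legendreSysPrimitive_sq hT]
  induction p with
  | zero =>
    rw [Finset.sum_range_one, integral_legendrePrimitive_zero_sq]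
    push_cast
    ring
  | succ p ih =>
    rw [Finset.sum_range_succ, ih, integral_legendrePrimitive_succ_sq]
    push_cast
    field_simp
    ring

end LegendreSys

theorem stmt11 (t T : ℝ) (hT : t < T) :
    Tendsto (fun p : ℕ => ∑ a ∈ Finset.range (p + 1), ∑ b ∈ Finset.range (p + 1),
      C4 t T (legendreSys t T) a a b b)
      atTop (nhds ((T - t) ^ 2 / 8)) := by
  have hsum : ∀ p : ℕ, ∑ a ∈ Finset.range (p + 1), ∑ b ∈ Finset.range (p + 1),
      C4 t T (legendreSys t T) a a b b =
        (T - t) ^ 2 / 8 - (T - t) ^ 2 / 16 * (1 / (2 * (p : ℝ) + 1) + 1 / (2 * (p : ℝ) + 3)) :=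
    fun p => by
      rw [sum_sum_C4_diag continuous_legendreSys (hasDerivAt_legendreSysPrimitive hT.ne)
        (legendreSysPrimitive_left hT.ne) (sum_legendreSysPrimitive_right_mul hT p),
        sum_integral_legendreSysPrimitive_sq hT]
      ring
  have hinv : ∀ c : ℝ, Tendsto (fun p : ℕ => 1 / (2 * (p : ℝ) + c)) atTop (nhds 0) := fun c => by
    simp only [one_div]
    exact tendsto_inv_atTop_zero.comp (tendsto_atTop_add_const_right _ c
      (tendsto_natCast_atTop_atTop.const_mul_atTop two_pos))
  simp only [hsum]
  simpa using tendsto_const_nhds.sub (((hinv 1).add (hinv 3)).const_mul ((T - t) ^ 2 / 16))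
end

section
/- Define the fourth-order Fourier coefficients C_{j_4 j_3 j_2 j_1} = ∫_t^T φ_{j_4}(s_4) ∫_t^{s_4} φ_{j_3}(s_3) ∫_t^{s_3} φ_{j_2}(s_2) ∫_t^{s_2} φ_{j_1}(s_1) ds_1 ds_2 ds_3 ds_4 with respect to the trigonometric orthonormal system. Then lim_{p → ∞} Σ_{j_4=0}^{p} Σ_{j_2=0}^{p} C_{j_4 j_2 j_2 j_4} = 0. -/
open MeasureTheory Filter Finset

open Real intervalIntegral

/-!
Write `F_j(x) = ∫_t^x φ_j`. Two integrations by parts give, for any continuous system,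
`C_{abba} = F_a(T) C_{bba} - C_{ba}² / 2` and
`C_{bba} = F_b(T) C_{ba} - F_b(T)² F_a(T) / 2 + (1/2) ∫_t^T F_b² φ_a`.
For the trigonometric system `F_j(T) = 0` for `j ≥ 1`, and the primitives of the modes lie again
in the span of the system: `ω_m F_{2m+1} = √2 φ_0 - φ_{2m+2}` and `ω_m F_{2m+2} = φ_{2m+1}`,
where `ω_m = 2π(m+1)/(T-t)`. Orthonormality then yields every `C_{abba}` in closed form. Passing
from `p` to `p + 1` changes the double sum by `-1/(2 ω_{⌊p/2⌋}²)`, and by `ζ(2) = π²/6` these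
decrements add up to `(T-t)²/24 = C_{0000}`.
-/

@[elab_as_elim]
theorem Nat.zero_odd_even_cases {motive : ℕ → Prop} (zero : motive 0)
    (odd : ∀ m, motive (2 * m + 1)) (even : ∀ m, motive (2 * m + 2)) (j : ℕ) : motive j := by
  obtain ⟨k, rfl | rfl⟩ := Nat.even_or_odd' j
  · cases k with
    | zero => exact zero
    | succ m => exact even m
  · exact odd k

theorem Finset.sum_range_succ_sum_range_succ {M : Type*} [AddCommMonoid M] (f : ℕ → ℕ → M)
    (n : ℕ) :
    ∑ a ∈ range (n + 1), ∑ b ∈ range (n + 1), f a b =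
      ∑ a ∈ range n, ∑ b ∈ range n, f a b
        + (∑ a ∈ range n, f a n + ∑ b ∈ range (n + 1), f n b) := by
  simp only [Finset.sum_range_succ _ n, Finset.sum_add_distrib]
  abel

lemma hasDerivAt_primitive (t : ℝ) {f : ℝ → ℝ} (hf : Continuous f) (x : ℝ) :
    HasDerivAt (fun y => ∫ u in t..y, f u) (f x) x :=
  (hf.integral_hasStrictDerivAt t x).hasDerivAt

lemma continuous_primitive (t : ℝ) {f : ℝ → ℝ} (hf : Continuous f) :
    Continuous (fun y => ∫ u in t..y, f u) :=
  continuous_iff_continuousAt.2 fun x => (hasDerivAt_primitive t hf x).continuousAt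

lemma integral_sub_const_pow (t x : ℝ) (n : ℕ) :
    ∫ s in t..x, (s - t) ^ n = (x - t) ^ (n + 1) / (n + 1) := by
  simp [integral_comp_sub_right (fun s => s ^ n)]

lemma integral_const_mul_mul_const_mul {a b : ℝ} (c d : ℝ) (f g : ℝ → ℝ) :
    ∫ x in a..b, c * f x * (d * g x) = c * d * ∫ x in a..b, f x * g x := by
  rw [← intervalIntegral.integral_const_mul]
  congr 1 with x
  ring

section IteratedIntegrals

variable {t T : ℝ} {φ : ℕ → ℝ → ℝ} {a b : ℕ}

lemma C2_one_one (φ : ℕ → ℝ → ℝ) (b a : ℕ) :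
    C2 t T φ 1 1 b a = ∫ s in t..T, φ b s * ∫ u in t..s, φ a u := by
  simp only [C2, Pi.one_apply, one_mul]

lemma C3_one_one_one (φ : ℕ → ℝ → ℝ) (c b a : ℕ) :
    C3 t T φ 1 1 1 c b a =
      ∫ s in t..T, φ c s * ∫ u in t..s, φ b u * ∫ v in t..u, φ a v := by
  simp only [C3, Pi.one_apply, one_mul]

theorem C2_add_C2_swap (ha : Continuous (φ a)) (hb : Continuous (φ b)) :
    C2 t T φ 1 1 b a + C2 t T φ 1 1 a b = (∫ s in t..T, φ a s) * ∫ s in t..T, φ b s := by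
  set F : ℝ → ℝ := fun x => ∫ u in t..x, φ a u
  set G : ℝ → ℝ := fun x => ∫ u in t..x, φ b u
  have hbF : Continuous fun x => φ b x * F x := hb.mul (continuous_primitive t ha)
  have haG : Continuous fun x => φ a x * G x := ha.mul (continuous_primitive t hb)
  have hderiv : ∀ x ∈ Set.uIcc t T, HasDerivAt (fun y => F y * G y)
      (φ b x * F x + φ a x * G x) x := fun x _ =>
    ((hasDerivAt_primitive t ha x).mul (hasDerivAt_primitive t hb x)).congr_deriv (by ring)
  have := integral_eq_sub_of_hasDerivAt hderiv ((hbF.add haG).intervalIntegrable t T)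
  rw [integral_add (hbF.intervalIntegrable t T) (haG.intervalIntegrable t T)] at this
  simpa [C2_one_one, F, G] using this

theorem C4_diag (ha : Continuous (φ a)) (hb : Continuous (φ b)) :
    C4 t T φ a b b a =
      (∫ s in t..T, φ a s) * C3 t T φ 1 1 1 b b a - C2 t T φ 1 1 b a ^ 2 / 2 := by
  set F : ℝ → ℝ := fun x => ∫ u in t..x, φ a u
  set H : ℝ → ℝ := fun x => ∫ u in t..x, φ b u * F u
  set Ψ : ℝ → ℝ := fun x => ∫ u in t..x, φ b u * H u
  have hbF : Continuous fun x => φ b x * F x := hb.mul (continuous_primitive t ha)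
  have hbH : Continuous fun x => φ b x * H x := hb.mul (continuous_primitive t hbF)
  have hderiv : ∀ x ∈ Set.uIcc t T,
      HasDerivAt (fun y => F y * Ψ y - H y ^ 2 / 2) (φ a x * Ψ x) x := fun x _ =>
    (((hasDerivAt_primitive t ha x).mul (hasDerivAt_primitive t hbH x)).sub
      (((hasDerivAt_primitive t hbF x).pow 2).div_const 2)).congr_deriv (by ring)
  have := integral_eq_sub_of_hasDerivAt hderiv
    ((ha.mul (continuous_primitive t hbH)).intervalIntegrable t T)
  simpa [C4, C3_one_one_one, C2_one_one, F, H, Ψ] using this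

theorem C3_diag (ha : Continuous (φ a)) (hb : Continuous (φ b)) :
    C3 t T φ 1 1 1 b b a =
      (∫ s in t..T, φ b s) * C2 t T φ 1 1 b a
        - (∫ s in t..T, φ b s) ^ 2 * (∫ s in t..T, φ a s) / 2
        + (∫ s in t..T, (∫ u in t..s, φ b u) ^ 2 * φ a s) / 2 := by
  set F : ℝ → ℝ := fun x => ∫ u in t..x, φ a u
  set G : ℝ → ℝ := fun x => ∫ u in t..x, φ b u
  set H : ℝ → ℝ := fun x => ∫ u in t..x, φ b u * F u
  have hbF : Continuous fun x => φ b x * F x := hb.mul (continuous_primitive t ha)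
  have hG2a : Continuous fun x => G x ^ 2 * φ a x := ((continuous_primitive t hb).pow 2).mul ha
  have hderiv : ∀ x ∈ Set.uIcc t T, HasDerivAt
      (fun y => G y * H y - G y ^ 2 * F y / 2 + (∫ u in t..y, G u ^ 2 * φ a u) / 2)
      (φ b x * H x) x := fun x _ =>
    ((((hasDerivAt_primitive t hb x).mul (hasDerivAt_primitive t hbF x)).sub
      ((((hasDerivAt_primitive t hb x).pow 2).mul (hasDerivAt_primitive t ha x)).div_const 2)).add
      ((hasDerivAt_primitive t hG2a x).div_const 2)).congr_deriv
        (by simp only [F, G, H, Pi.pow_apply]; ring)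
  have := integral_eq_sub_of_hasDerivAt hderiv
    ((hb.mul (continuous_primitive t hbF)).intervalIntegrable t T)
  simpa [C3_one_one_one, C2_one_one, F, G, H] using this

end IteratedIntegrals

section TrigSys

noncomputable def trigFreq (t T : ℝ) (m : ℕ) : ℝ := 2 * π * (m + 1) / (T - t)

variable {t T : ℝ}

@[simp] lemma trigSys_zero (x : ℝ) : trigSys t T 0 x = 1 / √(T - t) := by
  simp [trigSys]

lemma trigSys_odd (m : ℕ) (x : ℝ) :
    trigSys t T (2 * m + 1) x = √(2 / (T - t)) * sin (trigFreq t T m * (x - t)) := by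
  have h : (2 * m + 1 + 1) / 2 = m + 1 := by omega
  rw [trigSys, if_neg (by omega), if_pos (by omega), h, trigFreq]
  push_cast
  ring_nf

lemma trigSys_even (m : ℕ) (x : ℝ) :
    trigSys t T (2 * m + 2) x = √(2 / (T - t)) * cos (trigFreq t T m * (x - t)) := by
  have h : (2 * m + 2) / 2 = m + 1 := by omega
  rw [trigSys, if_neg (by omega), if_neg (by omega), h, trigFreq]
  push_cast
  ring_nf

@[fun_prop]
lemma continuous_trigSys (j : ℕ) : Continuous (trigSys t T j) := by
  unfold trigSys
  split_ifs <;> fun_prop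

lemma trigFreq_pos (hT : t < T) (m : ℕ) : 0 < trigFreq t T m := by
  unfold trigFreq
  have := sub_pos.2 hT
  positivity

lemma trigFreq_eq_int (m : ℕ) : trigFreq t T m = 2 * π * ((m + 1 : ℤ) : ℝ) / (T - t) := by
  simp [trigFreq]

lemma trigFreq_sub_trigFreq (m n : ℕ) :
    trigFreq t T m - trigFreq t T n = 2 * π * ((m - n : ℤ) : ℝ) / (T - t) := by
  simp only [trigFreq]; push_cast; ring

lemma trigFreq_add_trigFreq (m n : ℕ) :
    trigFreq t T m + trigFreq t T n = 2 * π * ((m + n + 2 : ℤ) : ℝ) / (T - t) := by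
  simp only [trigFreq]; push_cast; ring

lemma hasDerivAt_trigSys_odd (m : ℕ) (x : ℝ) :
    HasDerivAt (trigSys t T (2 * m + 1)) (trigFreq t T m * trigSys t T (2 * m + 2) x) x := by
  have h := ((((hasDerivAt_id x).sub_const t).const_mul (trigFreq t T m)).sin).const_mul
    (√(2 / (T - t)))
  rw [show trigSys t T (2 * m + 1) = _ from funext (trigSys_odd m), trigSys_even]
  exact h.congr_deriv (by simp; ring)

lemma hasDerivAt_trigSys_even (m : ℕ) (x : ℝ) :
    HasDerivAt (trigSys t T (2 * m + 2)) (-(trigFreq t T m * trigSys t T (2 * m + 1) x)) x := by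
  have h := ((((hasDerivAt_id x).sub_const t).const_mul (trigFreq t T m)).cos).const_mul
    (√(2 / (T - t)))
  rw [show trigSys t T (2 * m + 2) = _ from funext (trigSys_even m), trigSys_odd]
  exact h.congr_deriv (by simp; ring)

end TrigSys

section Orthonormal

variable {t T : ℝ}

lemma two_pi_int_div_ne_zero (hT : t < T) {k : ℤ} (hk : k ≠ 0) : 2 * π * k / (T - t) ≠ 0 := by
  have : T - t ≠ 0 := (sub_pos.2 hT).ne'
  have : (k : ℝ) ≠ 0 := by exact_mod_cast hk
  positivity

lemma integral_cos_int_mul (hT : t < T) (k : ℤ) :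
    ∫ x in t..T, cos (2 * π * k / (T - t) * (x - t)) = if k = 0 then T - t else 0 := by
  split_ifs with hk
  · simp [hk]
  rw [integral_comp_sub_right (fun x => cos (2 * π * k / (T - t) * x)),
    integral_comp_mul_left _ (two_pi_int_div_ne_zero hT hk), integral_cos,
    div_mul_cancel₀ _ (sub_pos.2 hT).ne',
    show 2 * π * k = ((2 * k : ℤ) : ℝ) * π by push_cast; ring, sin_int_mul_pi]
  simp

lemma integral_sin_int_mul (hT : t < T) (k : ℤ) :
    ∫ x in t..T, sin (2 * π * k / (T - t) * (x - t)) = 0 := by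
  rcases eq_or_ne k 0 with rfl | hk
  · simp
  rw [integral_comp_sub_right (fun x => sin (2 * π * k / (T - t) * x)),
    integral_comp_mul_left _ (two_pi_int_div_ne_zero hT hk), integral_sin,
    div_mul_cancel₀ _ (sub_pos.2 hT).ne', show 2 * π * k = k * (2 * π) by ring, cos_int_mul_two_pi]
  simp

lemma integral_sin_trigFreq (hT : t < T) (m : ℕ) :
    ∫ x in t..T, sin (trigFreq t T m * (x - t)) = 0 := by
  simp_rw [trigFreq_eq_int, integral_sin_int_mul hT]

lemma integral_cos_trigFreq (hT : t < T) (m : ℕ) :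
    ∫ x in t..T, cos (trigFreq t T m * (x - t)) = 0 := by
  simp_rw [trigFreq_eq_int, integral_cos_int_mul hT]
  exact if_neg (by omega)

lemma integral_sin_mul_sin_trigFreq (hT : t < T) (m n : ℕ) :
    ∫ x in t..T, sin (trigFreq t T m * (x - t)) * sin (trigFreq t T n * (x - t)) =
      if m = n then (T - t) / 2 else 0 := by
  have h x : sin (trigFreq t T m * (x - t)) * sin (trigFreq t T n * (x - t)) =
      (cos ((trigFreq t T m - trigFreq t T n) * (x - t)) -
        cos ((trigFreq t T m + trigFreq t T n) * (x - t))) / 2 := by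
    rw [sub_mul, add_mul, ← two_mul_sin_mul_sin]; ring
  simp_rw [h, trigFreq_sub_trigFreq, trigFreq_add_trigFreq]
  rw [intervalIntegral.integral_div, intervalIntegral.integral_sub
    ((by fun_prop : Continuous _).intervalIntegrable _ _)
    ((by fun_prop : Continuous _).intervalIntegrable _ _), integral_cos_int_mul hT,
    integral_cos_int_mul hT]
  simp only [sub_eq_zero, Nat.cast_inj]
  split_ifs <;> first | omega | ring

lemma integral_cos_mul_cos_trigFreq (hT : t < T) (m n : ℕ) :
    ∫ x in t..T, cos (trigFreq t T m * (x - t)) * cos (trigFreq t T n * (x - t)) =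
      if m = n then (T - t) / 2 else 0 := by
  have h x : cos (trigFreq t T m * (x - t)) * cos (trigFreq t T n * (x - t)) =
      (cos ((trigFreq t T m - trigFreq t T n) * (x - t)) +
        cos ((trigFreq t T m + trigFreq t T n) * (x - t))) / 2 := by
    rw [sub_mul, add_mul, ← two_mul_cos_mul_cos]; ring
  simp_rw [h, trigFreq_sub_trigFreq, trigFreq_add_trigFreq]
  rw [intervalIntegral.integral_div, intervalIntegral.integral_add
    ((by fun_prop : Continuous _).intervalIntegrable _ _)
    ((by fun_prop : Continuous _).intervalIntegrable _ _), integral_cos_int_mul hT,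
    integral_cos_int_mul hT]
  simp only [sub_eq_zero, Nat.cast_inj]
  split_ifs <;> first | omega | ring

lemma integral_sin_mul_cos_trigFreq (hT : t < T) (m n : ℕ) :
    ∫ x in t..T, sin (trigFreq t T m * (x - t)) * cos (trigFreq t T n * (x - t)) = 0 := by
  have h x : sin (trigFreq t T m * (x - t)) * cos (trigFreq t T n * (x - t)) =
      (sin ((trigFreq t T m - trigFreq t T n) * (x - t)) +
        sin ((trigFreq t T m + trigFreq t T n) * (x - t))) / 2 := by
    rw [sub_mul, add_mul, ← two_mul_sin_mul_cos]; ring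
  simp_rw [h, trigFreq_sub_trigFreq, trigFreq_add_trigFreq]
  rw [intervalIntegral.integral_div, intervalIntegral.integral_add
    ((by fun_prop : Continuous _).intervalIntegrable _ _)
    ((by fun_prop : Continuous _).intervalIntegrable _ _), integral_sin_int_mul hT,
    integral_sin_int_mul hT]
  simp

theorem integral_trigSys_mul_trigSys (hT : t < T) (i j : ℕ) :
    ∫ x in t..T, trigSys t T i x * trigSys t T j x = if i = j then 1 else 0 := by
  have hL : 0 < T - t := sub_pos.2 hT
  have hd : 1 / √(T - t) * (1 / √(T - t)) = 1 / (T - t) := by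
    rw [div_mul_div_comm, one_mul, Real.mul_self_sqrt hL.le]
  have hc : √(2 / (T - t)) * √(2 / (T - t)) = 2 / (T - t) := Real.mul_self_sqrt (by positivity)
  induction i using Nat.zero_odd_even_cases <;> induction j using Nat.zero_odd_even_cases <;>
    simp only [trigSys_zero, trigSys_odd, trigSys_even, integral_const_mul_mul_const_mul,
      intervalIntegral.integral_const_mul, intervalIntegral.integral_mul_const,
      integral_sin_trigFreq hT, integral_cos_trigFreq hT, integral_sin_mul_sin_trigFreq hT,
      integral_cos_mul_cos_trigFreq hT, integral_sin_mul_cos_trigFreq hT,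
      mul_comm (cos _) (sin _), hc, hd]
  all_goals simp [hL.ne'] <;> omega

lemma integral_trigSys_mul_trigSys_of_ne {i j : ℕ} (hT : t < T) (hij : i ≠ j) :
    ∫ x in t..T, trigSys t T i x * trigSys t T j x = 0 := by
  rw [integral_trigSys_mul_trigSys hT, if_neg hij]

lemma integral_trigSys_mul_self (hT : t < T) (i : ℕ) :
    ∫ x in t..T, trigSys t T i x * trigSys t T i x = 1 := by
  rw [integral_trigSys_mul_trigSys hT, if_pos rfl]

theorem integral_trigSys (hT : t < T) (j : ℕ) :
    ∫ x in t..T, trigSys t T j x = if j = 0 then √(T - t) else 0 := by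
  have hs : √(T - t) ≠ 0 := Real.sqrt_ne_zero'.2 (sub_pos.2 hT)
  calc ∫ x in t..T, trigSys t T j x
      = ∫ x in t..T, √(T - t) * (trigSys t T j x * trigSys t T 0 x) := by
        congr 1 with x
        rw [trigSys_zero]
        field_simp
    _ = _ := by rw [intervalIntegral.integral_const_mul, integral_trigSys_mul_trigSys hT]; simp

end Orthonormal

section Coefficients

variable {t T : ℝ}

theorem trigFreq_mul_primitive_trigSys_odd (m : ℕ) (x : ℝ) :
    trigFreq t T m * ∫ u in t..x, trigSys t T (2 * m + 1) u =
      √2 * trigSys t T 0 x - trigSys t T (2 * m + 2) x := by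
  have hderiv : ∀ y ∈ Set.uIcc t x, HasDerivAt (fun y => -trigSys t T (2 * m + 2) y)
      (trigFreq t T m * trigSys t T (2 * m + 1) y) y := fun y _ =>
    (hasDerivAt_trigSys_even m y).neg.congr_deriv (neg_neg _)
  rw [← intervalIntegral.integral_const_mul, integral_eq_sub_of_hasDerivAt hderiv
    (((continuous_trigSys _).const_mul _).intervalIntegrable _ _)]
  simp [trigSys_even]
  ring

theorem trigFreq_mul_primitive_trigSys_even (m : ℕ) (x : ℝ) :
    trigFreq t T m * ∫ u in t..x, trigSys t T (2 * m + 2) u = trigSys t T (2 * m + 1) x := by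
  rw [← intervalIntegral.integral_const_mul, integral_eq_sub_of_hasDerivAt
    (fun y _ => hasDerivAt_trigSys_odd m y)
    (((continuous_trigSys _).const_mul _).intervalIntegrable _ _)]
  simp [trigSys_odd]

theorem trigFreq_mul_C2_trigSys_odd (hT : t < T) (b m : ℕ) :
    trigFreq t T m * C2 t T (trigSys t T) 1 1 b (2 * m + 1) =
      √2 * (if b = 0 then 1 else 0) - if b = 2 * m + 2 then 1 else 0 := by
  have h s : trigFreq t T m * (trigSys t T b s * ∫ u in t..s, trigSys t T (2 * m + 1) u) =
      √2 * (trigSys t T b s * trigSys t T 0 s) - trigSys t T b s * trigSys t T (2 * m + 2) s := by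
    rw [mul_left_comm, trigFreq_mul_primitive_trigSys_odd]; ring
  rw [C2_one_one, ← intervalIntegral.integral_const_mul]
  simp_rw [h]
  rw [intervalIntegral.integral_sub (Continuous.intervalIntegrable (by fun_prop) _ _)
    (Continuous.intervalIntegrable (by fun_prop) _ _), intervalIntegral.integral_const_mul,
    integral_trigSys_mul_trigSys hT, integral_trigSys_mul_trigSys hT]

theorem trigFreq_mul_C2_trigSys_even (hT : t < T) (b m : ℕ) :
    trigFreq t T m * C2 t T (trigSys t T) 1 1 b (2 * m + 2) = if b = 2 * m + 1 then 1 else 0 := by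
  have h s : trigFreq t T m * (trigSys t T b s * ∫ u in t..s, trigSys t T (2 * m + 2) u) =
      trigSys t T b s * trigSys t T (2 * m + 1) s := by
    rw [mul_left_comm, trigFreq_mul_primitive_trigSys_even]
  rw [C2_one_one, ← intervalIntegral.integral_const_mul]
  simp_rw [h]
  rw [integral_trigSys_mul_trigSys hT]

theorem integral_sq_primitive_trigSys_odd (hT : t < T) (m : ℕ) :
    ∫ s in t..T, (∫ u in t..s, trigSys t T (2 * m + 1) u) ^ 2 = 3 / trigFreq t T m ^ 2 := by
  have hω := (trigFreq_pos hT m).ne'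
  have h s : (∫ u in t..s, trigSys t T (2 * m + 1) u) ^ 2 =
      (2 * (trigSys t T 0 s * trigSys t T 0 s)
        - 2 * √2 * (trigSys t T 0 s * trigSys t T (2 * m + 2) s)
        + trigSys t T (2 * m + 2) s * trigSys t T (2 * m + 2) s) / trigFreq t T m ^ 2 := by
    rw [eq_div_iff (pow_ne_zero 2 hω), ← mul_pow, mul_comm, trigFreq_mul_primitive_trigSys_odd]
    ring_nf
    simp only [Real.sq_sqrt zero_le_two]
    ring
  simp_rw [h]
  rw [intervalIntegral.integral_div, intervalIntegral.integral_add
    (Continuous.intervalIntegrable (by fun_prop) _ _)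
    (Continuous.intervalIntegrable (by fun_prop) _ _),
    intervalIntegral.integral_sub (Continuous.intervalIntegrable (by fun_prop) _ _)
    (Continuous.intervalIntegrable (by fun_prop) _ _), intervalIntegral.integral_const_mul,
    intervalIntegral.integral_const_mul, integral_trigSys_mul_self hT,
    integral_trigSys_mul_self hT, integral_trigSys_mul_trigSys_of_ne hT (by omega)]
  ring

theorem integral_sq_primitive_trigSys_even (hT : t < T) (m : ℕ) :
    ∫ s in t..T, (∫ u in t..s, trigSys t T (2 * m + 2) u) ^ 2 = 1 / trigFreq t T m ^ 2 := by
  have hω := (trigFreq_pos hT m).ne'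
  have h s : (∫ u in t..s, trigSys t T (2 * m + 2) u) ^ 2 =
      trigSys t T (2 * m + 1) s * trigSys t T (2 * m + 1) s / trigFreq t T m ^ 2 := by
    rw [eq_div_iff (pow_ne_zero 2 hω), ← mul_pow, mul_comm, trigFreq_mul_primitive_trigSys_even]
    ring
  simp_rw [h]
  rw [intervalIntegral.integral_div, integral_trigSys_mul_self hT]

end Coefficients

section DiagonalCoefficients

variable {t T : ℝ}

lemma C4_trigSys_diag_of_ne_zero (hT : t < T) {a : ℕ} (ha : a ≠ 0) (b : ℕ) :
    C4 t T (trigSys t T) a b b a = -C2 t T (trigSys t T) 1 1 b a ^ 2 / 2 := by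
  rw [C4_diag (continuous_trigSys a) (continuous_trigSys b), integral_trigSys hT, if_neg ha]
  ring

lemma C4_trigSys_zero_left (hT : t < T) {b : ℕ} (hb : b ≠ 0) :
    C4 t T (trigSys t T) 0 b b 0 =
      ((∫ s in t..T, (∫ u in t..s, trigSys t T b u) ^ 2)
        - C2 t T (trigSys t T) 1 1 0 b ^ 2) / 2 := by
  have hswap := C2_add_C2_swap (t := t) (T := T) (φ := trigSys t T)
    (continuous_trigSys 0) (continuous_trigSys b)
  rw [integral_trigSys hT, integral_trigSys hT, if_neg hb, mul_zero,
    ← eq_neg_iff_add_eq_zero] at hswap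
  have hs : √(T - t) ≠ 0 := Real.sqrt_ne_zero'.2 (sub_pos.2 hT)
  rw [C4_diag (continuous_trigSys 0) (continuous_trigSys b),
    C3_diag (continuous_trigSys 0) (continuous_trigSys b), hswap]
  simp only [integral_trigSys hT, if_neg hb, if_true]
  simp only [trigSys_zero, intervalIntegral.integral_mul_const]
  field_simp
  ring

theorem C4_trigSys_zero_zero (hT : t < T) : C4 t T (trigSys t T) 0 0 0 0 = (T - t) ^ 2 / 24 := by
  have hL := sub_pos.2 hT
  have hC2 : C2 t T (trigSys t T) 1 1 0 0 = (T - t) / 2 := by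
    have h := C2_add_C2_swap (t := t) (T := T) (φ := trigSys t T)
      (continuous_trigSys 0) (continuous_trigSys 0)
    rw [integral_trigSys hT, if_pos rfl, Real.mul_self_sqrt hL.le] at h
    linarith
  have hprim x : ∫ u in t..x, trigSys t T 0 u = (x - t) / √(T - t) := by simp [div_eq_mul_inv]
  have hsq : ∫ s in t..T, (∫ u in t..s, trigSys t T 0 u) ^ 2 * trigSys t T 0 s =
      (T - t) ^ 3 / 3 / √(T - t) ^ 3 := by
    simp_rw [hprim, trigSys_zero, div_pow, div_mul_div_comm, mul_one, ← pow_succ,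
      intervalIntegral.integral_div, integral_sub_const_pow]
    norm_num
  rw [C4_diag (continuous_trigSys 0) (continuous_trigSys 0),
    C3_diag (continuous_trigSys 0) (continuous_trigSys 0), hsq, hC2, integral_trigSys hT,
    if_pos rfl]
  have hr : T - t = √(T - t) ^ 2 := (Real.sq_sqrt hL.le).symm
  have hs : √(T - t) ≠ 0 := Real.sqrt_ne_zero'.2 hL
  generalize √(T - t) = r at hr hs ⊢
  rw [hr]
  field_simp
  ring

theorem C4_trigSys_odd_left (hT : t < T) (m b : ℕ) :
    C4 t T (trigSys t T) (2 * m + 1) b b (2 * m + 1) =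
      -(if b = 0 then 2 else if b = 2 * m + 2 then 1 else 0) / (2 * trigFreq t T m ^ 2) := by
  have hω := (trigFreq_pos hT m).ne'
  have hC2 := trigFreq_mul_C2_trigSys_odd hT b m
  rw [mul_comm, ← eq_div_iff hω] at hC2
  rw [C4_trigSys_diag_of_ne_zero hT (by omega), hC2]
  split_ifs <;> first | omega | (field_simp; norm_num)

theorem C4_trigSys_even_left (hT : t < T) (m b : ℕ) :
    C4 t T (trigSys t T) (2 * m + 2) b b (2 * m + 2) =
      -(if b = 2 * m + 1 then 1 else 0) / (2 * trigFreq t T m ^ 2) := by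
  have hω := (trigFreq_pos hT m).ne'
  have hC2 := trigFreq_mul_C2_trigSys_even hT b m
  rw [mul_comm, ← eq_div_iff hω] at hC2
  rw [C4_trigSys_diag_of_ne_zero hT (by omega), hC2]
  split_ifs <;> ring

theorem C4_trigSys_zero_left_succ (hT : t < T) (q : ℕ) :
    C4 t T (trigSys t T) 0 (q + 1) (q + 1) 0 = 1 / (2 * trigFreq t T (q / 2) ^ 2) := by
  rw [C4_trigSys_zero_left hT (by omega : q + 1 ≠ 0)]
  obtain ⟨m, rfl | rfl⟩ := Nat.even_or_odd' q
  · have hC2 := trigFreq_mul_C2_trigSys_odd hT 0 m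
    have hω := (trigFreq_pos hT m).ne'
    rw [if_pos rfl, if_neg (by omega), mul_comm, ← eq_div_iff hω] at hC2
    rw [integral_sq_primitive_trigSys_odd hT, hC2, show 2 * m / 2 = m by omega]
    field_simp
    norm_num
  · have hC2 := trigFreq_mul_C2_trigSys_even hT 0 m
    have hω := (trigFreq_pos hT m).ne'
    rw [if_neg (by omega), mul_eq_zero, or_iff_right hω] at hC2
    rw [show 2 * m + 1 + 1 = 2 * m + 2 by omega, integral_sq_primitive_trigSys_even hT, hC2,
      show (2 * m + 1) / 2 = m by omega]
    ring

end DiagonalCoefficients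

section Increment

variable {t T : ℝ}

lemma sum_C4_trigSys_col_odd (hT : t < T) (m : ℕ) :
    ∑ a ∈ range (2 * m + 1), C4 t T (trigSys t T) a (2 * m + 1) (2 * m + 1) a =
      1 / (2 * trigFreq t T m ^ 2) := by
  rw [Finset.sum_eq_single 0, C4_trigSys_zero_left_succ hT, show 2 * m / 2 = m by omega]
  · intro a ha ha0
    rw [mem_range] at ha
    induction a using Nat.zero_odd_even_cases with
    | zero => exact absurd rfl ha0
    | odd k => rw [C4_trigSys_odd_left hT, if_neg (by omega), if_neg (by omega)]; simp
    | even k => rw [C4_trigSys_even_left hT, if_neg (by omega)]; simp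
  · simp

lemma sum_C4_trigSys_row_odd (hT : t < T) (m : ℕ) :
    ∑ b ∈ range (2 * m + 2), C4 t T (trigSys t T) (2 * m + 1) b b (2 * m + 1) =
      -2 / (2 * trigFreq t T m ^ 2) := by
  rw [Finset.sum_eq_single 0, C4_trigSys_odd_left hT, if_pos rfl]
  · intro b hb hb0
    rw [mem_range] at hb
    rw [C4_trigSys_odd_left hT, if_neg hb0, if_neg (by omega)]; simp
  · simp

lemma sum_C4_trigSys_col_even (hT : t < T) (m : ℕ) :
    ∑ a ∈ range (2 * m + 2), C4 t T (trigSys t T) a (2 * m + 2) (2 * m + 2) a = 0 := by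
  rw [Finset.sum_eq_add_of_mem 0 (2 * m + 1) (by simp) (by simp) (by omega),
    C4_trigSys_zero_left_succ hT (2 * m + 1), C4_trigSys_odd_left hT, if_neg (by omega),
    if_pos rfl, show (2 * m + 1) / 2 = m by omega]
  · ring
  · intro a _ ⟨ha0, ha1⟩
    induction a using Nat.zero_odd_even_cases with
    | zero => exact absurd rfl ha0
    | odd k => rw [C4_trigSys_odd_left hT, if_neg (by omega), if_neg (by omega)]; simp
    | even k => rw [C4_trigSys_even_left hT, if_neg (by omega)]; simp

lemma sum_C4_trigSys_row_even (hT : t < T) (m : ℕ) :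
    ∑ b ∈ range (2 * m + 3), C4 t T (trigSys t T) (2 * m + 2) b b (2 * m + 2) =
      -1 / (2 * trigFreq t T m ^ 2) := by
  rw [Finset.sum_eq_single (2 * m + 1), C4_trigSys_even_left hT, if_pos rfl]
  · intro b _ hb
    rw [C4_trigSys_even_left hT, if_neg hb]; simp
  · simp

theorem sum_C4_trigSys_col_add_row (hT : t < T) (q : ℕ) :
    ∑ a ∈ range (q + 1), C4 t T (trigSys t T) a (q + 1) (q + 1) a
      + ∑ b ∈ range (q + 2), C4 t T (trigSys t T) (q + 1) b b (q + 1)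
      = -1 / (2 * trigFreq t T (q / 2) ^ 2) := by
  obtain ⟨m, rfl | rfl⟩ := Nat.even_or_odd' q
  · rw [sum_C4_trigSys_col_odd hT, sum_C4_trigSys_row_odd hT, show 2 * m / 2 = m by omega]
    ring
  · rw [show (2 * m + 1) / 2 = m by omega]
    rw [sum_C4_trigSys_col_even hT, sum_C4_trigSys_row_even hT, zero_add]

end Increment

section Limit

variable {t T : ℝ}

theorem sum_sum_C4_trigSys (hT : t < T) (p : ℕ) :
    ∑ a ∈ Finset.range (p + 1), ∑ b ∈ Finset.range (p + 1), C4 t T (trigSys t T) a b b a =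
      (T - t) ^ 2 / 24 - ∑ q ∈ Finset.range p, 1 / (2 * trigFreq t T (q / 2) ^ 2) := by
  induction p with
  | zero => simp [C4_trigSys_zero_zero hT]
  | succ p ih =>
    rw [Finset.sum_range_succ_sum_range_succ, ih, sum_C4_trigSys_col_add_row hT,
      Finset.sum_range_succ]
    ring

theorem hasSum_inv_two_mul_trigFreq_sq (hT : t < T) :
    HasSum (fun m => 1 / (2 * trigFreq t T m ^ 2)) ((T - t) ^ 2 / 48) := by
  have hζ : HasSum (fun m : ℕ => 1 / ((m + 1 : ℕ) : ℝ) ^ 2) (π ^ 2 / 6) :=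
    (hasSum_nat_add_iff (f := fun n : ℕ => 1 / (n : ℝ) ^ 2) 1).2 (by simpa using hasSum_zeta_two)
  have hL := (sub_pos.2 hT).ne'
  have hfun : (fun m => 1 / (2 * trigFreq t T m ^ 2)) =
      fun m : ℕ => (T - t) ^ 2 / (8 * π ^ 2) * (1 / ((m + 1 : ℕ) : ℝ) ^ 2) := by
    ext m
    simp only [trigFreq]
    push_cast
    field_simp
    ring
  rw [hfun, show (T - t) ^ 2 / 48 = (T - t) ^ 2 / (8 * π ^ 2) * (π ^ 2 / 6) by field_simp; ring]
  exact hζ.mul_left _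

theorem hasSum_inv_two_mul_trigFreq_half_sq (hT : t < T) :
    HasSum (fun q => 1 / (2 * trigFreq t T (q / 2) ^ 2)) ((T - t) ^ 2 / 24) := by
  have h := hasSum_inv_two_mul_trigFreq_sq hT
  have he k : 2 * k / 2 = k := by omega
  have ho k : (2 * k + 1) / 2 = k := by omega
  convert HasSum.even_add_odd (f := fun q => 1 / (2 * trigFreq t T (q / 2) ^ 2))
    (by simpa only [he] using h) (by simpa only [ho] using h) using 1
  ring

end Limit

theorem stmt16 (t T : ℝ) (hT : t < T) :
    Tendsto (fun p : ℕ => ∑ a ∈ Finset.range (p + 1), ∑ b ∈ Finset.range (p + 1),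
      C4 t T (trigSys t T) a b b a)
      atTop (nhds (0)) := by
  have h := (hasSum_inv_two_mul_trigFreq_half_sq hT).tendsto_sum_nat.const_sub ((T - t) ^ 2 / 24)
  rw [sub_self] at h
  simpa only [sum_sum_C4_trigSys hT] using h
end
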